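/- For every polynomial function s : ℝ² → ℝ of degree at most 2 and every x ∈ ℝ², s(x) − Σ_{i=1}^{3} s(p_i) ψ_i(x) = −(1/2) Σ_{i=1}^{3} |e_i|² · D²s[t_i, t_i] · ψ_{i−1}(x) ψ_{i+1}(x), where D²s[t_i, t_i] is the (constant) second directional derivative of s along t_i; that is, the error of the linear interpolant of s at the vertices of the triangle is −(1/2) Σ_i (∂²s/∂t_i²) ψ_{i−1} ψ_{i+1} |e_i|². -/

import Mathlib

noncomputable section
open MeasureTheory

namespace PaperStmt

/-- Euclidean dot product on `ℝ²`. -/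
def dotp (v w : ℝ × ℝ) : ℝ := v.1 * w.1 + v.2 * w.2

/-- Euclidean length on `ℝ²`. -/
def len (v : ℝ × ℝ) : ℝ := Real.sqrt (v.1 ^ 2 + v.2 ^ 2)

/-- Cross product (determinant) of two planar vectors. -/
def crossp (v w : ℝ × ℝ) : ℝ := v.1 * w.2 - v.2 * w.1

/-- The vertices `p 0, p 1, p 2` form a nondegenerate triangle listed counterclockwise. -/
def Ccw (p : Fin 3 → ℝ × ℝ) : Prop := 0 < crossp (p 1 - p 0) (p 2 - p 0)

/-- Vector of the edge `e_i` opposite vertex `p i`, oriented counterclockwise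
(from `p (i+1)` to `p (i−1)`). -/
def edgeVec (p : Fin 3 → ℝ × ℝ) (i : Fin 3) : ℝ × ℝ := p (i - 1) - p (i + 1)

/-- Length `|e_i|` of the edge opposite vertex `p i`. -/
def elen (p : Fin 3 → ℝ × ℝ) (i : Fin 3) : ℝ := len (edgeVec p i)

/-- Unit tangent `t_i = (p_{i−1} − p_{i+1})/|e_i|` of edge `e_i`. -/
def tvec (p : Fin 3 → ℝ × ℝ) (i : Fin 3) : ℝ × ℝ := (elen p i)⁻¹ • edgeVec p i

/-- Outward unit normal `n_i` of edge `e_i` (clockwise rotation of the tangent,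
which points outward for a counterclockwise triangle). -/
def nvec (p : Fin 3 → ℝ × ℝ) (i : Fin 3) : ℝ × ℝ := ((tvec p i).2, -(tvec p i).1)

/-- Interior angle `θ_i` of the triangle at the vertex `p i`. -/
def angleAt (p : Fin 3 → ℝ × ℝ) (i : Fin 3) : ℝ :=
  Real.arccos (dotp (p (i + 1) - p i) (p (i - 1) - p i) /
    (len (p (i + 1) - p i) * len (p (i - 1) - p i)))

/-- Outer product `v wᵀ` of two planar (column) vectors, as a `2 × 2` matrix. -/
def outerProd (v w : ℝ × ℝ) : Matrix (Fin 2) (Fin 2) ℝ :=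
  !![v.1 * w.1, v.1 * w.2; v.2 * w.1, v.2 * w.2]

/-- Basis matrices `φ_HHJ^i = −(1/(2 sin θ_{i−1} sin θ_{i+1})) (t_{i−1} t_{i+1}ᵀ + t_{i+1} t_{i−1}ᵀ)`
of the lowest-order Hellan–Herrmann–Johnson element. -/
def phiHHJ (p : Fin 3 → ℝ × ℝ) (i : Fin 3) : Matrix (Fin 2) (Fin 2) ℝ :=
  (-(2 * Real.sin (angleAt p (i - 1)) * Real.sin (angleAt p (i + 1)))⁻¹) •
    (outerProd (tvec p (i - 1)) (tvec p (i + 1)) + outerProd (tvec p (i + 1)) (tvec p (i - 1)))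

/-- The quadratic form `vᵀ τ v` of a `2 × 2` matrix on a planar vector. -/
def qf (τ : Matrix (Fin 2) (Fin 2) ℝ) (v : ℝ × ℝ) : ℝ :=
  v.1 * (τ 0 0 * v.1 + τ 0 1 * v.2) + v.2 * (τ 1 0 * v.1 + τ 1 1 * v.2)

end PaperStmt

namespace PaperStmt

/-- Directional derivative of `f` along `v`. -/
def dderiv (v : ℝ × ℝ) (f : ℝ × ℝ → ℝ) : ℝ × ℝ → ℝ := fun x => fderiv ℝ f x v

/-- Second directional derivative `D²f[u, v]`. -/
def d2 (u v : ℝ × ℝ) (f : ℝ × ℝ → ℝ) : ℝ × ℝ → ℝ := dderiv u (dderiv v f)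

/-- Third directional derivative `D³f[u, v, w]`. -/
def d3 (u v w : ℝ × ℝ) (f : ℝ × ℝ → ℝ) : ℝ × ℝ → ℝ := dderiv u (dderiv v (dderiv w f))

end PaperStmt

namespace PaperStmt

/-- `f : ℝ² → ℝ` is a polynomial function of (total) degree at most `l`. -/
def IsPolyFun (l : ℕ) (f : ℝ × ℝ → ℝ) : Prop :=
  ∃ q : MvPolynomial (Fin 2) ℝ, q.totalDegree ≤ l ∧
    ∀ x : ℝ × ℝ, f x = MvPolynomial.eval ![x.1, x.2] q

end PaperStmt

namespace PaperStmt

/-- `ψ` is the family of barycentric coordinates of the triangle with vertices `p`: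
affine functions with `ψ i (p j) = δ_{ij}`. -/
def IsBarycentric (p : Fin 3 → ℝ × ℝ) (ψ : Fin 3 → ℝ × ℝ → ℝ) : Prop :=
  (∀ i : Fin 3, ∃ a b c : ℝ, ∀ x : ℝ × ℝ, ψ i x = a * x.1 + b * x.2 + c) ∧
  (∀ i j : Fin 3, ψ i (p j) = if i = j then 1 else 0)

end PaperStmt

/-!
Write `s y = B y y + ℓ y + c` with `B` bilinear, so that `D²s[u, v] = B u v + B v u` and
`|e_i|² D²s[t_i, t_i] = 2 B e_i e_i`. Barycentric coordinates reproduce affine functions, so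
`∑ ψ_i = 1` and `∑ ψ_i p_i = x`; hence the affine part of `s` is interpolated exactly and the
error is `B x x - ∑ ψ_i B p_i p_i` with `x = ∑ ψ_i p_i`. Expanding by bilinearity and using
`∑ ψ_i = 1`, this is `-∑ ψ_{i-1} ψ_{i+1} B e_i e_i`.
-/

theorem LinearMap.BilinForm.apply_sum_smul_sub_sum_fin_three {R M : Type*} [CommRing R]
    [AddCommGroup M] [Module R M] (B : LinearMap.BilinForm R M) (w : Fin 3 → R)
    (hw : ∑ i, w i = 1) (p : Fin 3 → M) :
    B (∑ i, w i • p i) (∑ i, w i • p i) - ∑ i, w i * B (p i) (p i) =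
      -∑ i, w (i - 1) * w (i + 1) * B (p (i - 1) - p (i + 1)) (p (i - 1) - p (i + 1)) := by
  simp only [Fin.sum_univ_three, map_add, map_smul, map_sub, LinearMap.add_apply,
    LinearMap.smul_apply, LinearMap.sub_apply, smul_eq_mul] at hw ⊢
  simp only [show (0 - 1 : Fin 3) = 2 from rfl, show (1 - 1 : Fin 3) = 0 from rfl,
    show (2 - 1 : Fin 3) = 1 from rfl, show (0 + 1 : Fin 3) = 1 from rfl,
    show (1 + 1 : Fin 3) = 2 from rfl, show (2 + 1 : Fin 3) = 0 from rfl]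
  -- the two sides differ by `(∑ i, w i * B (p i) (p i)) * (∑ i, w i - 1)`
  linear_combination (w 0 * B (p 0) (p 0) + w 1 * B (p 1) (p 1) + w 2 * B (p 2) (p 2)) * hw

theorem ContinuousLinearMap.hasFDerivAt_apply_self {𝕜 E F : Type*} [NontriviallyNormedField 𝕜]
    [NormedAddCommGroup E] [NormedSpace 𝕜 E] [NormedAddCommGroup F] [NormedSpace 𝕜 F]
    (B : E →L[𝕜] E →L[𝕜] F) (x : E) :
    HasFDerivAt (fun y => B y y) (B x + B.flip x) x := by
  refine (B.hasFDerivAt_of_bilinear (hasFDerivAt_id x) (hasFDerivAt_id x)).congr_fderiv ?_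
  ext v
  simp

namespace PaperStmt

def quadraticFunctions (𝕜 E : Type*) [NontriviallyNormedField 𝕜] [NormedAddCommGroup E]
    [NormedSpace 𝕜 E] : Submodule 𝕜 (E → 𝕜) where
  carrier := {f | ∃ (B : E →L[𝕜] E →L[𝕜] 𝕜) (ℓ : E →L[𝕜] 𝕜) (c : 𝕜), f = fun y => B y y + ℓ y + c}
  add_mem' := by
    rintro _ _ ⟨B, ℓ, c, rfl⟩ ⟨B', ℓ', c', rfl⟩
    exact ⟨B + B', ℓ + ℓ', c + c', by ext; simp only [Pi.add_apply, add_apply]; ring⟩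
  zero_mem' := ⟨0, 0, 0, by ext; simp⟩
  smul_mem' := by
    rintro r _ ⟨B, ℓ, c, rfl⟩
    exact ⟨r • B, r • ℓ, r • c, by ext; simp only [Pi.smul_apply, smul_apply, smul_eq_mul]; ring⟩

open ContinuousLinearMap in
lemma monomial_mem_quadraticFunctions {a b : ℕ} (h : a + b ≤ 2) :
    (fun y : ℝ × ℝ => y.1 ^ a * y.2 ^ b) ∈ quadraticFunctions ℝ (ℝ × ℝ) := by
  match a, b, h with
  | 0, 0, _ => exact ⟨0, 0, 1, by ext; simp⟩
  | 1, 0, _ => exact ⟨0, fst ℝ ℝ ℝ, 0, by ext; simp⟩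
  | 0, 1, _ => exact ⟨0, snd ℝ ℝ ℝ, 0, by ext; simp⟩
  | 2, 0, _ => exact ⟨(mul ℝ ℝ).bilinearComp (fst ℝ ℝ ℝ) (fst ℝ ℝ ℝ), 0, 0, by ext; simp [sq]⟩
  | 1, 1, _ => exact ⟨(mul ℝ ℝ).bilinearComp (fst ℝ ℝ ℝ) (snd ℝ ℝ ℝ), 0, 0, by ext; simp⟩
  | 0, 2, _ => exact ⟨(mul ℝ ℝ).bilinearComp (snd ℝ ℝ ℝ) (snd ℝ ℝ ℝ), 0, 0, by ext; simp [sq]⟩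
  | a + 3, _, h | 2, b + 1, h | 1, b + 2, h | 0, b + 3, h => omega

lemma IsPolyFun.mem_quadraticFunctions {s : ℝ × ℝ → ℝ} (hs : IsPolyFun 2 s) :
    s ∈ quadraticFunctions ℝ (ℝ × ℝ) := by
  obtain ⟨q, hq, rfl⟩ : ∃ q : MvPolynomial (Fin 2) ℝ, q.totalDegree ≤ 2 ∧
      s = ∑ d ∈ q.support, q.coeff d • fun y : ℝ × ℝ => y.1 ^ d 0 * y.2 ^ d 1 := by
    obtain ⟨q, hq, hs⟩ := hs
    refine ⟨q, hq, funext fun y => ?_⟩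
    simp [hs, MvPolynomial.eval_eq', Fin.prod_univ_two, Finset.sum_apply]
  refine Submodule.sum_mem _ fun d hd => Submodule.smul_mem _ _ (monomial_mem_quadraticFunctions ?_)
  have := MvPolynomial.le_totalDegree hd
  rw [Finsupp.sum_fintype _ _ (fun _ => rfl), Fin.sum_univ_two] at this
  omega

lemma dderiv_quadratic (B : ℝ × ℝ →L[ℝ] ℝ × ℝ →L[ℝ] ℝ) (ℓ : ℝ × ℝ →L[ℝ] ℝ) (c : ℝ) (v : ℝ × ℝ) :
    dderiv v (fun y => B y y + ℓ y + c) = fun y => (B.flip v + B v) y + ℓ v := by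
  ext x
  have h : HasFDerivAt (fun y => B y y + ℓ y + c) (B x + B.flip x + ℓ) x :=
    ((B.hasFDerivAt_apply_self x).add ℓ.hasFDerivAt).add_const c
  rw [dderiv, h.fderiv]
  simp [add_comm]

lemma d2_quadratic (B : ℝ × ℝ →L[ℝ] ℝ × ℝ →L[ℝ] ℝ) (ℓ : ℝ × ℝ →L[ℝ] ℝ) (c : ℝ) (u v x : ℝ × ℝ) :
    d2 u v (fun y => B y y + ℓ y + c) x = B u v + B v u := by
  have h : HasFDerivAt (fun y => (B.flip v + B v) y + ℓ v) (B.flip v + B v) x :=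
    (B.flip v + B v).hasFDerivAt.add_const _
  rw [d2, dderiv_quadratic, dderiv, h.fderiv]
  simp

lemma Ccw.edgeVec_ne_zero {p : Fin 3 → ℝ × ℝ} (hp : Ccw p) (i : Fin 3) : edgeVec p i ≠ 0 := by
  intro h
  rw [edgeVec, sub_eq_zero] at h
  fin_cases i <;> simp_all [Ccw, crossp, show (-1 : Fin 3) = 2 from rfl, mul_comm]

lemma len_ne_zero {v : ℝ × ℝ} (hv : v ≠ 0) : len v ≠ 0 := by
  rw [len, Real.sqrt_ne_zero']
  contrapose! hv
  ext <;> simp only [Prod.fst_zero, Prod.snd_zero] <;> nlinarith [sq_nonneg v.1, sq_nonneg v.2]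

lemma Ccw.elen_ne_zero {p : Fin 3 → ℝ × ℝ} (hp : Ccw p) (i : Fin 3) : elen p i ≠ 0 :=
  len_ne_zero (hp.edgeVec_ne_zero i)

lemma Ccw.elen_sq_mul_d2_tvec {p : Fin 3 → ℝ × ℝ} (hp : Ccw p) (B : ℝ × ℝ →L[ℝ] ℝ × ℝ →L[ℝ] ℝ)
    (ℓ : ℝ × ℝ →L[ℝ] ℝ) (c : ℝ) (i : Fin 3) (x : ℝ × ℝ) :
    elen p i ^ 2 * d2 (tvec p i) (tvec p i) (fun y => B y y + ℓ y + c) x =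
      2 * B (edgeVec p i) (edgeVec p i) := by
  have h := hp.elen_ne_zero i
  rw [d2_quadratic, tvec]
  simp only [map_smul, smul_apply, smul_eq_mul]
  field_simp
  ring

lemma Ccw.affine_eq_zero {p : Fin 3 → ℝ × ℝ} (hp : Ccw p) {a b c : ℝ}
    (h : ∀ j, a * (p j).1 + b * (p j).2 + c = 0) : a = 0 ∧ b = 0 ∧ c = 0 := by
  have hΔ : crossp (p 1 - p 0) (p 2 - p 0) ≠ 0 := hp.ne'
  have h0 := h 0
  have h1 := h 1
  have h2 := h 2
  simp only [crossp, Prod.fst_sub, Prod.snd_sub] at hΔ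
  -- Cramer's rule: `a Δ` and `b Δ` are cofactor combinations of the three equations
  have ha : a = 0 := by
    refine (mul_eq_zero.mp ?_).resolve_right hΔ
    linear_combination
      ((p 1).2 - (p 2).2) * h0 + ((p 2).2 - (p 0).2) * h1 + ((p 0).2 - (p 1).2) * h2
  have hb : b = 0 := by
    refine (mul_eq_zero.mp ?_).resolve_right hΔ
    linear_combination
      ((p 2).1 - (p 1).1) * h0 + ((p 0).1 - (p 2).1) * h1 + ((p 1).1 - (p 0).1) * h2
  exact ⟨ha, hb, by linear_combination h0 - (p 0).1 * ha - (p 0).2 * hb⟩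

lemma IsBarycentric.sum_mul_affine {p : Fin 3 → ℝ × ℝ} {ψ : Fin 3 → ℝ × ℝ → ℝ} (hp : Ccw p)
    (hψ : IsBarycentric p ψ) (a b c : ℝ) (x : ℝ × ℝ) :
    ∑ i, ψ i x * (a * (p i).1 + b * (p i).2 + c) = a * x.1 + b * x.2 + c := by
  choose α β γ hαβγ using hψ.1
  set g := fun i => a * (p i).1 + b * (p i).2 + c
  have hexp : ∀ y, ∑ i, ψ i y * g i =
      (∑ i, α i * g i) * y.1 + (∑ i, β i * g i) * y.2 + ∑ i, γ i * g i := by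
    intro y
    simp only [hαβγ, Fin.sum_univ_three]
    ring
  obtain ⟨ha, hb, hc⟩ := hp.affine_eq_zero (a := ∑ i, α i * g i - a) (b := ∑ i, β i * g i - b)
      (c := ∑ i, γ i * g i - c) fun j => by
    have := hexp (p j)
    simp only [hψ.2, ite_mul, one_mul, zero_mul, Finset.sum_ite_eq', Finset.mem_univ,
      if_true] at this
    linear_combination -this
  change ∑ i, ψ i x * g i = _
  rw [hexp]
  linear_combination x.1 * ha + x.2 * hb + hc

lemma IsBarycentric.sum_eq_one {p : Fin 3 → ℝ × ℝ} {ψ : Fin 3 → ℝ × ℝ → ℝ} (hp : Ccw p)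
    (hψ : IsBarycentric p ψ) (x : ℝ × ℝ) : ∑ i, ψ i x = 1 := by
  simpa using hψ.sum_mul_affine hp 0 0 1 x

lemma IsBarycentric.sum_smul_eq {p : Fin 3 → ℝ × ℝ} {ψ : Fin 3 → ℝ × ℝ → ℝ} (hp : Ccw p)
    (hψ : IsBarycentric p ψ) (x : ℝ × ℝ) : ∑ i, ψ i x • p i = x := by
  ext
  · simpa [Prod.fst_sum] using hψ.sum_mul_affine hp 1 0 0 x
  · simpa [Prod.snd_sum] using hψ.sum_mul_affine hp 0 1 0 x

lemma IsBarycentric.quadratic_sub_sum_mul {p : Fin 3 → ℝ × ℝ} {ψ : Fin 3 → ℝ × ℝ → ℝ}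
    (hp : Ccw p) (hψ : IsBarycentric p ψ) (B : ℝ × ℝ →L[ℝ] ℝ × ℝ →L[ℝ] ℝ)
    (ℓ : ℝ × ℝ →L[ℝ] ℝ) (c : ℝ) (x : ℝ × ℝ) :
    (B x x + ℓ x + c) - ∑ i, (B (p i) (p i) + ℓ (p i) + c) * ψ i x =
      -∑ i, ψ (i - 1) x * ψ (i + 1) x * B (edgeVec p i) (edgeVec p i) := by
  have h1 := hψ.sum_eq_one hp x
  have hx := hψ.sum_smul_eq hp x
  have key := B.toBilinForm.apply_sum_smul_sub_sum_fin_three (ψ · x) h1 p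
  have hℓ : ℓ x = ∑ i, ψ i x * ℓ (p i) := by
    conv_lhs => rw [← hx]
    simp
  rw [hx] at key
  simp only [ContinuousLinearMap.toBilinForm_apply, edgeVec, Fin.sum_univ_three] at key hℓ h1 ⊢
  linear_combination key + hℓ - c * h1

end PaperStmt

open PaperStmt in
/-- Error of linear interpolation at the vertices for a quadratic polynomial `s`:
`s − Σ_i s(p_i) ψ_i = −(1/2) Σ_i |e_i|² (∂²s/∂t_i²) ψ_{i−1} ψ_{i+1}`. -/
theorem quadratic_linear_interp_error
    (p : Fin 3 → ℝ × ℝ) (hp : Ccw p)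
    (ψ : Fin 3 → ℝ × ℝ → ℝ) (hψ : IsBarycentric p ψ)
    (s : ℝ × ℝ → ℝ) (hs : IsPolyFun 2 s) :
    ∀ x : ℝ × ℝ,
      s x - ∑ i : Fin 3, s (p i) * ψ i x =
        -(1 / 2) * ∑ i : Fin 3,
          elen p i ^ 2 * d2 (tvec p i) (tvec p i) s x * (ψ (i - 1) x * ψ (i + 1) x) := by
  intro x
  obtain ⟨B, ℓ, c, rfl⟩ := hs.mem_quadraticFunctions
  simp only [hp.elen_sq_mul_d2_tvec, hψ.quadratic_sub_sum_mul hp]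
  rw [Finset.mul_sum, ← Finset.sum_neg_distrib]
  exact Finset.sum_congr rfl fun i _ => by ring
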